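/- If G is a finite abelian group, then the rough boundary algebra 𝔇ⁿ_rough and the smooth boundary algebra 𝔇ⁿ_smooth are isomorphic as ℂ-algebras (both being isomorphic to the direct sum of |G| copies of M_{|G|^{n−1}}(ℂ)). -/

import Mathlib

/-!
Fix a nondegenerate bicharacter `β` on `G` (one exists because `G` is isomorphic to its dual)
and let `F` be the Fourier transform on functions on `Gⁿ` with kernel `∏ᵢ β (xᵢ, yᵢ)`.
Conjugation by `F` turns multiplication by the character `β (s, ·)` into the translation by `s`,
and the translation by `t` into multiplication by `β (·, t⁻¹)`. The projection `P^h_i` is, by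
orthogonality, a combination of the characters `x ↦ β (a, xᵢ)`, so it goes to a combination of
the translations `R^g_i`; the operator `Q̃^{(g)}_i` is a translation, so it goes to multiplication
by `β (xᵢ⁻¹ xᵢ₊₁, g)`, a combination of the projections `S̃^{(h)}_i`. Read backwards, the same
identities put `F⁻¹ R F` and `F⁻¹ S̃ F` into the rough algebra, so conjugation by `F` maps
`𝔇ⁿ_rough` onto `𝔇ⁿ_smooth`.
-/

noncomputable section

open scoped BigOperators

/-- The Hilbert space `H_n = ℂ[G]^{⊗ n}`, realized as functions `G^n → ℂ`;
the basis ket `|g₁,…,g_n⟩` is the indicator function of `(g₁,…,g_n)`. -/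
abbrev Hn (G : Type) (n : ℕ) : Type := (Fin n → G) → ℂ

variable (G : Type) [CommGroup G] [Fintype G] [DecidableEq G] (n : ℕ)

/-- Diagonal operator with diagonal entries `c` (in the ket basis). -/
def diagOp (c : (Fin n → G) → ℂ) : Module.End ℂ (Hn G n) where
  toFun f := fun x => c x * f x
  map_add' f g := by funext x; simp only [Pi.add_apply]; ring
  map_smul' r f := by
    funext x
    simp only [Pi.smul_apply, smul_eq_mul, RingHom.id_apply]
    ring

/-- The operator sending the ket `|y⟩` to the ket `|σ y⟩`, where `τ = σ⁻¹`. -/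
def permOp (τ : (Fin n → G) → (Fin n → G)) : Module.End ℂ (Hn G n) :=
  LinearMap.funLeft ℂ ℂ τ

/-- `P^h_i`: projection onto kets whose `i`-th label equals `h`. -/
def Pop (i : Fin n) (h : G) : Module.End ℂ (Hn G n) :=
  diagOp G n fun x => if x i = h then 1 else 0

/-- `Q̃^{(g)}` at sites `i` and `j` (used with `j = i + 1`):
`|…, g_i, g_j, …⟩ ↦ |…, g_i g⁻¹, g g_j, …⟩`. -/
def Qop (i j : Fin n) (g : G) : Module.End ℂ (Hn G n) :=
  permOp G n fun x =>
    Function.update (Function.update x i (x i * g)) j (g⁻¹ * x j)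

/-- The rough boundary algebra `𝔇ⁿ_rough`. -/
def DRough : Subalgebra ℂ (Module.End ℂ (Hn G n)) :=
  Algebra.adjoin ℂ
    ({T | ∃ (i : Fin n) (h : G), T = Pop G n i h} ∪
     {T | ∃ (i j : Fin n) (g : G), (i : ℕ) + 1 = (j : ℕ) ∧ T = Qop G n i j g})

/-- `R^g_i`: right translation at site `i`, `|…, g_i, …⟩ ↦ |…, g_i g, …⟩`. -/
def Rop (i : Fin n) (g : G) : Module.End ℂ (Hn G n) :=
  permOp G n fun x => Function.update x i (x i * g⁻¹)

/-- `S̃^{(h)}` at sites `i` and `j` (used with `j = i + 1`): the projection onto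
kets with `g_i⁻¹ g_j = h`. -/
def Sop (i j : Fin n) (h : G) : Module.End ℂ (Hn G n) :=
  diagOp G n fun x => if (x i)⁻¹ * x j = h then 1 else 0

/-- The smooth boundary algebra `𝔇ⁿ_smooth`. -/
def DSmooth : Subalgebra ℂ (Module.End ℂ (Hn G n)) :=
  Algebra.adjoin ℂ
    ({T | ∃ (i : Fin n) (g : G), T = Rop G n i g} ∪
     {T | ∃ (i j : Fin n) (h : G), (i : ℕ) + 1 = (j : ℕ) ∧ T = Sop G n i j h})


open Function

lemma AlgEquiv.map_adjoin_eq_adjoin {R A B : Type*} [CommSemiring R] [Semiring A] [Semiring B]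
    [Algebra R A] [Algebra R B] (Φ : A ≃ₐ[R] B) {s : Set A} {t : Set B}
    (hs : ∀ a ∈ s, Φ a ∈ Algebra.adjoin R t) (ht : ∀ b ∈ t, Φ.symm b ∈ Algebra.adjoin R s) :
    (Algebra.adjoin R s).map (Φ : A →ₐ[R] B) = Algebra.adjoin R t := by
  apply le_antisymm
  · rw [AlgHom.map_adjoin]
    exact Algebra.adjoin_le (Set.image_subset_iff.mpr hs)
  · exact Algebra.adjoin_le fun b hb => ⟨Φ.symm b, ht b hb, Φ.apply_symm_apply b⟩

lemma Function.update_mul_eq_mul_mulSingle {ι K : Type*} [DecidableEq ι] [Group K] (x : ι → K)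
    (i : ι) (c : K) : update x i (x i * c) = x * Pi.mulSingle i c := by
  ext k
  rcases eq_or_ne k i with rfl | hk <;> simp [*]

lemma Algebra.lmul_comp_eq_sum {R X H : Type*} [CommSemiring R] [Fintype H] [DecidableEq H]
    (φ : X → H) (c : H → R) : Algebra.lmul R (X → R) (fun x => c (φ x)) =
      ∑ h, c h • Algebra.lmul R (X → R) (fun x => if φ x = h then 1 else 0) := by
  simp_rw [← map_smul, ← map_sum]
  congr 1
  ext x
  simp

lemma LinearEquiv.conjAlgEquiv_apply_eq_of_comp {R M : Type*} [CommSemiring R]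
    [AddCommMonoid M] [Module R M] (e : M ≃ₗ[R] M) {A C : Module.End R M}
    (h : e.toLinearMap ∘ₗ A = C ∘ₗ e.toLinearMap) : e.conjAlgEquiv R A = C :=
  (e.comp_toLinearMap_symm_eq _ _).mpr h

def translOp {K : Type*} [Mul K] (t : K) : Module.End ℂ (K → ℂ) :=
  LinearMap.funLeft ℂ ℂ (· * t)

namespace Bicharacter

lemma apply_inv_left {K : Type*} [CommGroup K] (β : K →* K →* ℂ) (a b : K) :
    β a⁻¹ b = (β a b)⁻¹ :=
  map_inv (β.flip b) a

section Fourier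

variable {K : Type*} [CommGroup K] [Fintype K] (β : K →* K →* ℂ)

lemma sum_apply_left [DecidableEq K] (hβ : Injective β.flip) (b : K) :
    ∑ a, β a b = if b = 1 then (Fintype.card K : ℂ) else 0 := by
  simpa [hβ.eq_iff' (map_one _)] using sum_hom_units (β.flip b)

lemma ite_eq_sum [DecidableEq K] (hβ : Injective β.flip) (b h : K) :
    (if b = h then 1 else 0 : ℂ) = (Fintype.card K : ℂ)⁻¹ * ∑ a, β a h⁻¹ * β a b := by
  have hcard : (Fintype.card K : ℂ) ≠ 0 := Nat.cast_ne_zero.mpr Fintype.card_ne_zero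
  simp_rw [← map_mul (β _), sum_apply_left β hβ, inv_mul_eq_one, eq_comm (a := h)]
  split_ifs <;> simp [hcard]

def fourier : Module.End ℂ (K → ℂ) :=
  Matrix.mulVecLin (Matrix.of fun x y => β x y)

lemma fourier_apply (f : K → ℂ) (x : K) : fourier β f x = ∑ y, β x y * f y := by
  simp [fourier, Matrix.mulVec, dotProduct]

lemma sum_mul_fourier (hβ : Injective β.flip) (f : K → ℂ) (y : K) :
    ∑ x, β x y⁻¹ * fourier β f x = Fintype.card K * f y := by
  classical
  simp_rw [fourier_apply, Finset.mul_sum, ← mul_assoc, ← map_mul (β _)]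
  rw [Finset.sum_comm]
  simp_rw [← Finset.sum_mul, sum_apply_left β hβ, inv_mul_eq_one, ite_mul, zero_mul]
  simp

lemma fourier_injective (hβ : Injective β.flip) : Injective (fourier β) := by
  refine (injective_iff_map_eq_zero _).mpr fun f hf => funext fun y => ?_
  have := sum_mul_fourier β hβ f y
  simpa [hf, Fintype.card_ne_zero] using this.symm

def fourierEquiv (hβ : Injective β.flip) : (K → ℂ) ≃ₗ[ℂ] (K → ℂ) :=
  LinearEquiv.ofInjectiveEndo (fourier β) (fourier_injective β hβ)

lemma fourier_comp_lmul (s : K) :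
    fourier β ∘ₗ Algebra.lmul ℂ (K → ℂ) (β s) = translOp s ∘ₗ fourier β := by
  refine LinearMap.ext fun f => funext fun x => ?_
  simp [fourier_apply, translOp, mul_assoc]

lemma fourier_comp_translOp (t : K) :
    fourier β ∘ₗ translOp t = Algebra.lmul ℂ (K → ℂ) (fun x => β x t⁻¹) ∘ₗ fourier β := by
  refine LinearMap.ext fun f => funext fun x => ?_
  simp only [LinearMap.comp_apply, fourier_apply, translOp, LinearMap.funLeft_apply,
    Algebra.coe_lmul_eq_mul, LinearMap.mul_apply', Pi.mul_apply, Finset.mul_sum]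
  calc ∑ y, β x y * f (y * t) = ∑ y, β x (y * t * t⁻¹) * f (y * t) := by
        simp_rw [mul_inv_cancel_right]
    _ = ∑ y, β x (y * t⁻¹) * f y :=
        Equiv.sum_comp (Equiv.mulRight t) fun y => β x (y * t⁻¹) * f y
    _ = ∑ y, β x t⁻¹ * (β x y * f y) := by
        refine Finset.sum_congr rfl fun y _ => ?_
        rw [map_mul]
        ring

def fourierConj (hβ : Injective β.flip) : Module.End ℂ (K → ℂ) ≃ₐ[ℂ] Module.End ℂ (K → ℂ) :=
  (fourierEquiv β hβ).conjAlgEquiv ℂ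

variable (hβ : Injective β.flip)

lemma fourierConj_lmul (s : K) :
    fourierConj β hβ (Algebra.lmul ℂ (K → ℂ) (β s)) = translOp s :=
  LinearEquiv.conjAlgEquiv_apply_eq_of_comp _ (fourier_comp_lmul β s)

lemma fourierConj_translOp (t : K) :
    fourierConj β hβ (translOp t) = Algebra.lmul ℂ (K → ℂ) (fun x => β x t⁻¹) :=
  LinearEquiv.conjAlgEquiv_apply_eq_of_comp _ (fourier_comp_translOp β t)

lemma fourierConj_symm_translOp (s : K) :
    (fourierConj β hβ).symm (translOp s) = Algebra.lmul ℂ (K → ℂ) (β s) :=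
  (AlgEquiv.symm_apply_eq _).mpr (fourierConj_lmul β hβ s).symm

lemma fourierConj_symm_lmul (t : K) :
    (fourierConj β hβ).symm (Algebra.lmul ℂ (K → ℂ) (fun x => β x t)) = translOp t⁻¹ :=
  (AlgEquiv.symm_apply_eq _).mpr (by rw [fourierConj_translOp, inv_inv])

end Fourier

section Pi

variable {K : Type*} [CommGroup K] (β : K →* K →* ℂ) {ι : Type*} [Fintype ι]

def pi : (ι → K) →* (ι → K) →* ℂ :=
  ∏ i, (β.compl₂ (Pi.evalMonoidHom _ i)).comp (Pi.evalMonoidHom _ i)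

lemma pi_apply (x y : ι → K) : pi β x y = ∏ i, β (x i) (y i) := by
  simp [pi]

lemma pi_flip : (pi β).flip = pi (ι := ι) β.flip := by
  ext x y
  simp [pi_apply]

variable [DecidableEq ι]

lemma pi_mulSingle_right (x : ι → K) (i : ι) (b : K) : pi β x (Pi.mulSingle i b) = β (x i) b := by
  rw [pi_apply, Finset.prod_eq_single i (fun k _ hk => by simp [hk]) (by simp)]
  simp

lemma pi_mulSingle_left (i : ι) (a : K) (y : ι → K) : pi β (Pi.mulSingle i a) y = β a (y i) := by
  rw [← MonoidHom.flip_apply, pi_flip, pi_mulSingle_right, MonoidHom.flip_apply]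

lemma injective_pi (hβ : Injective β) : Injective (pi (ι := ι) β) := by
  refine (injective_iff_map_eq_one _).mpr fun x hx => funext fun i => ?_
  refine (injective_iff_map_eq_one β).mp hβ _ (MonoidHom.ext fun b => ?_)
  simpa [pi_mulSingle_right] using DFunLike.congr_fun hx (Pi.mulSingle i b)

lemma injective_pi_flip (hβ : Injective β.flip) : Injective (pi (ι := ι) β).flip :=
  pi_flip (ι := ι) β ▸ injective_pi β.flip hβ

lemma pi_apply_mulSingle_inv_mul_mulSingle (x : ι → K) (i j : ι) (a : K) :
    pi β x (Pi.mulSingle i a⁻¹ * Pi.mulSingle j a) = β ((x i)⁻¹ * x j) a := by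
  rw [map_mul, pi_mulSingle_right, pi_mulSingle_right, map_mul, MonoidHom.mul_apply,
    map_inv, apply_inv_left]

end Pi

lemma exists_injective_injective_flip (G : Type*) [CommGroup G] [Finite G] :
    ∃ β : G →* G →* ℂ, Injective β ∧ Injective β.flip := by
  have : NeZero (Monoid.exponent G : ℂ) :=
    ⟨Nat.cast_ne_zero.mpr Monoid.exponent_ne_zero_of_finite⟩
  obtain ⟨e⟩ := CommGroup.monoidHom_mulEquiv_of_hasEnoughRootsOfUnity G ℂ
  refine ⟨(MonoidHom.compHom (Units.coeHom ℂ)).comp e.symm.toMonoidHom, ?_, ?_⟩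
  · intro φ ψ h
    refine e.symm.injective (MonoidHom.ext fun b => Units.ext ?_)
    simpa using DFunLike.congr_fun h b
  · refine (injective_iff_map_eq_one _).mpr fun b hb => ?_
    by_contra hb1
    obtain ⟨φ, hφ⟩ := CommGroup.exists_apply_ne_one_of_hasEnoughRootsOfUnity G ℂ hb1
    refine hφ (Units.ext ?_)
    simpa using DFunLike.congr_fun hb (e φ)

end Bicharacter

section BoundaryAlgebras

open Bicharacter

variable {G n}

set_option linter.unusedSectionVars false

lemma Rop_eq_translOp (i : Fin n) (g : G) : Rop G n i g = translOp (Pi.mulSingle i g⁻¹) := by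
  simp only [Rop, permOp, translOp, update_mul_eq_mul_mulSingle]

lemma Qop_eq_translOp {i j : Fin n} (hij : i ≠ j) (g : G) :
    Qop G n i j g = translOp (Pi.mulSingle i g⁻¹ * Pi.mulSingle j g)⁻¹ := by
  unfold Qop permOp translOp
  congr 1
  funext x
  have hj : (x * Pi.mulSingle i g : Fin n → G) j = x j := by simp [Pi.mulSingle_eq_of_ne hij.symm]
  rw [update_mul_eq_mul_mulSingle, mul_comm g⁻¹, ← hj, update_mul_eq_mul_mulSingle, mul_inv_rev,
    Pi.mulSingle_inv, Pi.mulSingle_inv, inv_inv]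
  ac_rfl

lemma lmul_comp_eval_mem_DRough (i : Fin n) (c : G → ℂ) :
    Algebra.lmul ℂ (Hn G n) (fun x => c (x i)) ∈ DRough G n := by
  rw [Algebra.lmul_comp_eq_sum (X := Fin n → G) (· i)]
  refine Subalgebra.sum_mem _ fun h _ => Subalgebra.smul_mem _ (Algebra.subset_adjoin ?_) _
  exact Or.inl ⟨i, h, rfl⟩

lemma lmul_comp_mem_DSmooth {i j : Fin n} (hij : (i : ℕ) + 1 = j) (c : G → ℂ) :
    Algebra.lmul ℂ (Hn G n) (fun x => c ((x i)⁻¹ * x j)) ∈ DSmooth G n := by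
  rw [Algebra.lmul_comp_eq_sum (fun x : Fin n → G => (x i)⁻¹ * x j)]
  refine Subalgebra.sum_mem _ fun h _ => Subalgebra.smul_mem _ (Algebra.subset_adjoin ?_) _
  exact Or.inr ⟨i, j, h, hij, rfl⟩

lemma Pop_eq_lmul (i : Fin n) (h : G) :
    Pop G n i h = Algebra.lmul ℂ (Hn G n) (fun x => if x i = h then 1 else 0) := rfl

lemma Sop_eq_lmul (i j : Fin n) (h : G) :
    Sop G n i j h = Algebra.lmul ℂ (Hn G n) (fun x => if (x i)⁻¹ * x j = h then 1 else 0) := rfl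

variable (β : G →* G →* ℂ) (hβ' : Injective β.flip)

lemma fourierConj_Pop_mem_DSmooth (i : Fin n) (h : G) :
    fourierConj (pi β) (injective_pi_flip β hβ') (Pop G n i h) ∈ DSmooth G n := by
  have hP : (fun x : Fin n → G => if x i = h then (1 : ℂ) else 0) =
      (Fintype.card G : ℂ)⁻¹ • ∑ a, β a h⁻¹ • ⇑(pi β (Pi.mulSingle i a)) := by
    funext x
    rw [ite_eq_sum β hβ' (x i) h]
    simp [pi_mulSingle_left, Finset.sum_apply]
  rw [Pop_eq_lmul, hP]
  simp only [map_smul, map_sum, fourierConj_lmul]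
  refine Subalgebra.smul_mem _ (Subalgebra.sum_mem _ fun a _ => Subalgebra.smul_mem _ ?_ _) _
  exact Algebra.subset_adjoin (Or.inl ⟨i, a⁻¹, by rw [Rop_eq_translOp, inv_inv]⟩)

lemma fourierConj_Qop_mem_DSmooth {i j : Fin n} (hij : (i : ℕ) + 1 = j) (g : G) :
    fourierConj (pi β) (injective_pi_flip β hβ') (Qop G n i j g) ∈ DSmooth G n := by
  have hne : i ≠ j := fun h => by simp [h] at hij
  rw [Qop_eq_translOp hne, fourierConj_translOp, inv_inv]
  simp_rw [pi_apply_mulSingle_inv_mul_mulSingle]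
  exact lmul_comp_mem_DSmooth hij (β.flip g)

lemma fourierConj_symm_Rop_mem_DRough (i : Fin n) (g : G) :
    (fourierConj (pi β) (injective_pi_flip β hβ')).symm (Rop G n i g) ∈ DRough G n := by
  rw [Rop_eq_translOp, fourierConj_symm_translOp, funext (pi_mulSingle_left β i g⁻¹)]
  exact lmul_comp_eval_mem_DRough i (β g⁻¹)

lemma fourierConj_symm_Sop_mem_DRough (hβ : Injective β) {i j : Fin n} (hij : (i : ℕ) + 1 = j)
    (h : G) :
    (fourierConj (pi β) (injective_pi_flip β hβ')).symm (Sop G n i j h) ∈ DRough G n := by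
  have hne : i ≠ j := fun h => by simp [h] at hij
  have hS : (fun x : Fin n → G => if (x i)⁻¹ * x j = h then (1 : ℂ) else 0) =
      (Fintype.card G : ℂ)⁻¹ • ∑ a, β h⁻¹ a •
        fun x => pi β x (Pi.mulSingle i a⁻¹ * Pi.mulSingle j a) := by
    funext x
    rw [ite_eq_sum β.flip hβ ((x i)⁻¹ * x j) h]
    simp [pi_apply_mulSingle_inv_mul_mulSingle, Finset.sum_apply]
  rw [Sop_eq_lmul, hS]
  simp only [map_smul, map_sum, fourierConj_symm_lmul]
  refine Subalgebra.smul_mem _ (Subalgebra.sum_mem _ fun a _ => Subalgebra.smul_mem _ ?_ _) _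
  exact Algebra.subset_adjoin (Or.inr ⟨i, j, a, hij, (Qop_eq_translOp hne a).symm⟩)

lemma map_fourierConj_DRough (hβ : Injective β) :
    (DRough G n).map (fourierConj (pi (ι := Fin n) β) (injective_pi_flip β hβ') :
      Module.End ℂ (Hn G n) →ₐ[ℂ] Module.End ℂ (Hn G n)) = DSmooth G n := by
  refine AlgEquiv.map_adjoin_eq_adjoin _ ?_ ?_
  · rintro _ (⟨i, h, rfl⟩ | ⟨i, j, g, hij, rfl⟩)
    · exact fourierConj_Pop_mem_DSmooth β hβ' i h
    · exact fourierConj_Qop_mem_DSmooth β hβ' hij g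
  · rintro _ (⟨i, g, rfl⟩ | ⟨i, j, h, hij, rfl⟩)
    · exact fourierConj_symm_Rop_mem_DRough β hβ' i g
    · exact fourierConj_symm_Sop_mem_DRough β hβ' hβ hij h

end BoundaryAlgebras

theorem stmt14 :
    Nonempty (↥(DRough G n) ≃ₐ[ℂ] ↥(DSmooth G n)) := by
  obtain ⟨β, hβ, hβ'⟩ := Bicharacter.exists_injective_injective_flip G
  exact ⟨(AlgEquiv.subalgebraMap _ _).trans
    (Subalgebra.equivOfEq _ _ (map_fourierConj_DRough β hβ' hβ))⟩
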